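/- Let G be a 2-edge-connected multigraph and e any edge of G. Then the tree/forest of 2-edge-connected components of G − e has exactly 2 leaves: #l((G − e)^Br) = #l(G^Br) = 2. -/

import Mathlib

/-- A finite multigraph: loops and parallel edges allowed. -/
structure Multigraph where
  V : Type
  E : Type
  finV : Finite V
  finE : Finite E
  src : E → V
  tgt : E → V

namespace Multigraph

attribute [instance] Multigraph.finV Multigraph.finE

variable (G : Multigraph)

/-- Adjacency using only edges in `S`. -/
def Adj (S : Set G.E) (u v : G.V) : Prop :=
  ∃ e ∈ S, (G.src e = u ∧ G.tgt e = v) ∨ (G.src e = v ∧ G.tgt e = u)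

/-- Reachability using only edges in `S`. -/
def ReachOn (S : Set G.E) : G.V → G.V → Prop :=
  Relation.ReflTransGen (G.Adj S)

/-- Reachability in `G`. -/
def Reach : G.V → G.V → Prop := G.ReachOn Set.univ

def Connected : Prop := Nonempty G.V ∧ ∀ u v : G.V, G.Reach u v

/-- An edge is a bridge iff its removal disconnects its endpoints. -/
def IsBridge (e : G.E) : Prop := ¬ G.ReachOn {f | f ≠ e} (G.src e) (G.tgt e)

def TwoEdgeConnected : Prop := G.Connected ∧ ∀ e : G.E, ¬ G.IsBridge e

/-- The graph `G^Br` obtained by contracting all non-bridge edges: its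
vertices are the 2-edge-connected components of `G`, its edges the bridges. -/
def Br : Multigraph where
  V := Quot (G.ReachOn {e | ¬ G.IsBridge e})
  E := {e : G.E // G.IsBridge e}
  finV := Finite.of_surjective _ Quot.exists_rep
  finE := Subtype.finite
  src e := Quot.mk _ (G.src e.1)
  tgt e := Quot.mk _ (G.tgt e.1)

/-- Number of edges adjacent to a vertex (loops counted once; used only
for forests, which have no loops). -/
noncomputable def degAt (v : G.V) : ℕ := {e : G.E | G.src e = v ∨ G.tgt e = v}.ncard

/-- Leaf count of a forest, with the convention that an isolated vertex
(a single-vertex tree) counts as `2` leaves. -/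
noncomputable def numLeaves : ℕ :=
  2 * {v : G.V | G.degAt v = 0}.ncard + {v : G.V | G.degAt v = 1}.ncard

/-- The induced subgraph on a set of vertices. -/
def induce (W : Set G.V) : Multigraph where
  V := W
  E := {e : G.E // G.src e ∈ W ∧ G.tgt e ∈ W}
  finV := Subtype.finite
  finE := Subtype.finite
  src e := ⟨G.src e.1, e.2.1⟩
  tgt e := ⟨G.tgt e.1, e.2.2⟩

/-- Deletion of an edge. -/
def deleteEdge (e : G.E) : Multigraph where
  V := G.V
  E := {f : G.E // f ≠ e}
  finV := G.finV
  finE := Subtype.finite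
  src f := G.src f.1
  tgt f := G.tgt f.1

/-- Valence of a vertex, loops counted twice. -/
noncomputable def valence (v : G.V) : ℕ :=
  {e : G.E | G.src e = v}.ncard + {e : G.E | G.tgt e = v}.ncard

/-- Number of edges joining `w` to the set `S` (for `w ∉ S`). -/
noncomputable def edgesTo (w : G.V) (S : Set G.V) : ℕ :=
  {e : G.E | (G.src e = w ∧ G.tgt e ∈ S) ∨ (G.tgt e = w ∧ G.src e ∈ S)}.ncard

/-- The Dhar subgraph `Dh(v, d)`: the smallest set of vertices containing `v`
that is closed under adding a vertex `w` whenever `d w` is smaller than the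
number of edges joining `w` to the set. -/
def dhar (d : G.V → ℤ) (v : G.V) : Set G.V :=
  ⋂₀ {S : Set G.V | v ∈ S ∧ ∀ w ∉ S, (G.edgesTo w S : ℤ) ≤ d w}

end Multigraph

/-- A vertex-weighted finite multigraph. -/
structure WGraph extends Multigraph where
  weight : V → ℕ

namespace WGraph

variable (G : WGraph)

/-- The genus `1 - |V| + |E| + Σ_v g_v`. -/
noncomputable def genus : ℤ :=
  1 - (Nat.card G.V : ℤ) + Nat.card G.E + ∑ᶠ v : G.V, (G.weight v : ℤ)

def Semistable : Prop := ∀ v : G.V, G.weight v = 0 → 2 ≤ G.toMultigraph.valence v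

def Stable : Prop := ∀ v : G.V,
  (G.weight v = 0 → 3 ≤ G.toMultigraph.valence v) ∧
  (G.weight v = 1 → 1 ≤ G.toMultigraph.valence v)

/-- Induced weighted subgraph. -/
def induce (W : Set G.V) : WGraph :=
  { G.toMultigraph.induce W with weight := fun v => G.weight v.1 }

/-- The genus of the induced subgraph on `W`:
`|E(W)| - |W| + c(W) + Σ_{v ∈ W} g_v`. -/
noncomputable def genusOf (W : Set G.V) : ℤ :=
  (Nat.card (G.toMultigraph.induce W).E : ℤ) - Nat.card W
    + Nat.card (Quot (G.toMultigraph.induce W).Reach)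
    + ∑ᶠ v ∈ W, (G.weight v : ℤ)

end WGraph

/-!
Let every bridge of a connected graph separate two vertices `a` and `b`; then the bridge tree is a
path from the class of `a` to that of `b`. Removing a bridge `f` leaves two sides, the vertices
reachable from `a` and from `b`. If there is a bridge, every 2-edge-connected class is incident to
one. The class of `a` is incident to only one: for two bridges `f ≠ g` at it, `a` reaches both
ends of `f` avoiding `g` and both ends of `g` avoiding `f`, and a walk from an end of `f` to `b`
avoiding `f` either avoids `g` or leaves an end of `g` for the last time. A class incident to
exactly one bridge `f` is joined to `a` or `b` on its side of `f`, and the last bridge of that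
walk would be incident to the class, so it is the class of `a` or of `b`.

In `G - e` every bridge `f` separates the ends of `e`: otherwise a detour around `e` avoiding `f`
turns the detour around `f` that exists in `G` into one avoiding `e`.
-/

namespace Multigraph

section Reach

variable {G : Multigraph} {S T : Set G.E} {e f g : G.E} {a b u v x y : G.V}

theorem Adj.symm (h : G.Adj S u v) : G.Adj S v u := by
  obtain ⟨f, hf, h⟩ := h
  exact ⟨f, hf, h.symm⟩

theorem ReachOn.single (hf : f ∈ S) : G.ReachOn S (G.src f) (G.tgt f) :=
  Relation.ReflTransGen.single ⟨f, hf, Or.inl ⟨rfl, rfl⟩⟩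

theorem ReachOn.trans (h : G.ReachOn S u v) (h' : G.ReachOn S v x) : G.ReachOn S u x :=
  Relation.ReflTransGen.trans h h'

theorem ReachOn.symm (h : G.ReachOn S u v) : G.ReachOn S v u :=
  Relation.ReflTransGen.mono (fun _ _ => Adj.symm) _ _ h.swap

theorem reachOn_equivalence (S : Set G.E) : Equivalence (G.ReachOn S) :=
  ⟨fun _ => Relation.ReflTransGen.refl, ReachOn.symm, ReachOn.trans⟩

theorem ReachOn.lift (hST : ∀ u v, G.Adj S u v → G.ReachOn T u v) (h : G.ReachOn S u v) :
    G.ReachOn T u v :=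
  Relation.ReflTransGen.lift' id hST _ _ h

theorem ReachOn.mono (hST : S ⊆ T) (h : G.ReachOn S u v) : G.ReachOn T u v :=
  h.lift fun _ _ ⟨f, hf, hends⟩ => Relation.ReflTransGen.single ⟨f, hST hf, hends⟩

theorem ReachOn.src_and_tgt (hf : f ∈ S)
    (h : G.ReachOn S a (G.src f) ∨ G.ReachOn S a (G.tgt f)) :
    G.ReachOn S a (G.src f) ∧ G.ReachOn S a (G.tgt f) := by
  rcases h with h | h
  · exact ⟨h, h.trans (.single hf)⟩
  · exact ⟨h.trans (ReachOn.single hf).symm, h⟩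

theorem ReachOn.inter_or_last_edge_diff (T : Set G.E) (h : G.ReachOn S x y) :
    G.ReachOn (S ∩ T) x y ∨
      ∃ f ∈ S \ T, G.ReachOn (S ∩ T) (G.src f) y ∨ G.ReachOn (S ∩ T) (G.tgt f) y := by
  induction h with
  | refl => exact Or.inl Relation.ReflTransGen.refl
  | @tail v y _ step ih =>
    obtain ⟨f, hfS, hends⟩ := step
    by_cases hfT : f ∈ T
    · have hstep : G.ReachOn (S ∩ T) v y :=
        Relation.ReflTransGen.single ⟨f, ⟨hfS, hfT⟩, hends⟩
      rcases ih with ih | ⟨f', hf', ih⟩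
      · exact Or.inl (ih.trans hstep)
      · exact Or.inr ⟨f', hf', ih.imp (·.trans hstep) (·.trans hstep)⟩
    · refine Or.inr ⟨f, ⟨hfS, hfT⟩, ?_⟩
      rcases hends with ⟨-, rfl⟩ | ⟨rfl, -⟩
      · exact Or.inr Relation.ReflTransGen.refl
      · exact Or.inl Relation.ReflTransGen.refl

theorem ReachOn.diff_singleton (h : G.ReachOn S u v)
    (he : G.ReachOn (S \ {e}) (G.src e) (G.tgt e)) : G.ReachOn (S \ {e}) u v := by
  refine h.lift fun x y ⟨f, hfS, hends⟩ => ?_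
  by_cases hfe : f = e
  · subst hfe
    rcases hends with ⟨rfl, rfl⟩ | ⟨rfl, rfl⟩
    exacts [he, he.symm]
  · exact Relation.ReflTransGen.single ⟨f, ⟨hfS, hfe⟩, hends⟩

theorem Connected.reachOn_src_or_tgt (hc : G.Connected) (f : G.E) (w : G.V) :
    G.ReachOn {h | h ≠ f} (G.src f) w ∨ G.ReachOn {h | h ≠ f} (G.tgt f) w := by
  rcases (hc.2 (G.src f) w).inter_or_last_edge_diff {h | h ≠ f} with h | ⟨f', ⟨-, hf'⟩, h⟩
  · exact Or.inl (h.mono Set.inter_subset_right)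
  · obtain rfl : f' = f := not_not.mp hf'
    exact h.imp (·.mono Set.inter_subset_right) (·.mono Set.inter_subset_right)

theorem Connected.reachOn_or_reachOn (hc : G.Connected) (hab : ¬ G.ReachOn {h | h ≠ f} a b)
    (w : G.V) : G.ReachOn {h | h ≠ f} a w ∨ G.ReachOn {h | h ≠ f} b w := by
  rcases hc.reachOn_src_or_tgt f a with ha | ha <;>
    rcases hc.reachOn_src_or_tgt f b with hb | hb <;>
    rcases hc.reachOn_src_or_tgt f w with hw | hw <;>
    first
    | exact Or.inl (ha.symm.trans hw)
    | exact Or.inr (hb.symm.trans hw)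
    | exact absurd (ha.symm.trans hb) hab

theorem Connected.reachOn_of_reachOn_endpoints (hc : G.Connected)
    (hf : G.ReachOn {h | h ≠ g} a (G.src f) ∧ G.ReachOn {h | h ≠ g} a (G.tgt f))
    (hg : G.ReachOn {h | h ≠ f} a (G.src g) ∧ G.ReachOn {h | h ≠ f} a (G.tgt g)) :
    G.ReachOn {h | h ≠ f} a b ∨ G.ReachOn {h | h ≠ g} a b := by
  have hsub : {h | h ≠ f} ∩ {h | h ≠ g} ⊆ {h | h ≠ g} := Set.inter_subset_right
  have hsub' : {h | h ≠ f} ∩ {h | h ≠ g} ⊆ {h | h ≠ f} := Set.inter_subset_left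
  obtain ⟨x, hax, hxb⟩ :
      ∃ x, G.ReachOn {h | h ≠ g} a x ∧ G.ReachOn {h | h ≠ f} x b := by
    rcases hc.reachOn_src_or_tgt f b with h | h
    exacts [⟨_, hf.1, h⟩, ⟨_, hf.2, h⟩]
  rcases hxb.inter_or_last_edge_diff {h | h ≠ g} with h | ⟨g', ⟨-, hg'⟩, h⟩
  · exact Or.inr (hax.trans (h.mono hsub))
  · obtain rfl : g' = g := not_not.mp hg'
    rcases h with h | h
    exacts [Or.inl (hg.1.trans (h.mono hsub')), Or.inl (hg.2.trans (h.mono hsub'))]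

end Reach

section BridgeTree

variable {G H : Multigraph} {a b c : H.V}

def incidenceSet (v : G.V) : Set G.E := {e | G.src e = v ∨ G.tgt e = v}

theorem degAt_eq_ncard_incidenceSet (v : G.V) : G.degAt v = (G.incidenceSet v).ncard := rfl

def toBr (H : Multigraph) (v : H.V) : H.Br.V := Quot.mk _ v

theorem setOf_not_isBridge_subset {g : H.E} (hg : H.IsBridge g) :
    {h | ¬ H.IsBridge h} ⊆ {h | h ≠ g} :=
  fun _ hh hhg => hh (hhg ▸ hg)

theorem toBr_eq_toBr_iff {u v : H.V} :
    H.toBr u = H.toBr v ↔ H.ReachOn {h | ¬ H.IsBridge h} u v :=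
  Quot.eq.trans (reachOn_equivalence _).eqvGen_iff

theorem mem_br_incidenceSet_toBr {F : H.Br.E} :
    F ∈ H.Br.incidenceSet (H.toBr c) ↔
      H.ReachOn {h | ¬ H.IsBridge h} (H.src F.1) c ∨
        H.ReachOn {h | ¬ H.IsBridge h} (H.tgt F.1) c :=
  or_congr toBr_eq_toBr_iff toBr_eq_toBr_iff

theorem ReachOn.toBr_eq_or_exists_incident {S : Set H.E} {x y : H.V} (h : H.ReachOn S x y) :
    H.toBr x = H.toBr y ∨ ∃ F : H.Br.E, F.1 ∈ S ∧ F ∈ H.Br.incidenceSet (H.toBr y) := by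
  rcases h.inter_or_last_edge_diff {h | ¬ H.IsBridge h} with h | ⟨f, ⟨hfS, hf⟩, h⟩
  · exact Or.inl (toBr_eq_toBr_iff.mpr (h.mono Set.inter_subset_right))
  · refine Or.inr ⟨⟨f, not_not.mp hf⟩, hfS, mem_br_incidenceSet_toBr.mpr ?_⟩
    exact h.imp (·.mono Set.inter_subset_right) (·.mono Set.inter_subset_right)

theorem br_incidenceSet_nonempty (hc : H.Connected) {g : H.E} (hg : H.IsBridge g)
    (v : H.Br.V) :
    (H.Br.incidenceSet v).Nonempty := by
  obtain ⟨c, rfl⟩ := Quot.exists_rep v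
  rcases (hc.2 (H.src g) c).toBr_eq_or_exists_incident with h | ⟨F, -, hF⟩
  exacts [⟨⟨g, hg⟩, Or.inl h⟩, ⟨F, hF⟩]

variable (hc : H.Connected) (hsep : ∀ f, H.IsBridge f → ¬ H.ReachOn {h | h ≠ f} a b)
include hc hsep

theorem br_incidenceSet_toBr_subsingleton : (H.Br.incidenceSet (H.toBr a)).Subsingleton := by
  have hends : ∀ F ∈ H.Br.incidenceSet (H.toBr a), ∀ g : H.E, H.IsBridge g → F.1 ≠ g →
      H.ReachOn {h | h ≠ g} a (H.src F.1) ∧ H.ReachOn {h | h ≠ g} a (H.tgt F.1) := by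
    intro F hF g hg hFg
    have hnb := setOf_not_isBridge_subset hg
    refine ReachOn.src_and_tgt hFg ?_
    exact (mem_br_incidenceSet_toBr.mp hF).imp (·.symm.mono hnb) (·.symm.mono hnb)
  intro F hF F' hF'
  by_contra hne
  have hne' : F.1 ≠ F'.1 := fun h => hne (Subtype.ext h)
  rcases hc.reachOn_of_reachOn_endpoints (b := b) (hends F hF F'.1 F'.2 hne')
      (hends F' hF' F.1 F.2 hne'.symm) with h | h
  exacts [hsep _ F.2 h, hsep _ F'.2 h]

theorem toBr_eq_or_eq_of_br_incidenceSet_eq_singleton {F : H.Br.E}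
    (hF : H.Br.incidenceSet (H.toBr c) = {F}) : H.toBr c = H.toBr a ∨ H.toBr c = H.toBr b := by
  have hside : ∀ p, H.ReachOn {h | h ≠ F.1} p c → H.toBr c = H.toBr p := fun p hp => by
    rcases hp.toBr_eq_or_exists_incident with h | ⟨F', hF'S, hF'⟩
    · exact h.symm
    · rw [hF] at hF'
      exact absurd (congrArg Subtype.val hF') hF'S
  exact (hc.reachOn_or_reachOn (hsep _ F.2) c).imp (hside a) (hside b)

end BridgeTree

theorem numLeaves_br_of_forall_not_isBridge {H : Multigraph} (hc : H.Connected)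
    (h : ∀ f, ¬ H.IsBridge f) : H.Br.numLeaves = 2 := by
  have hE : IsEmpty H.Br.E := ⟨fun F => h F.1 F.2⟩
  have hdeg : ∀ v : H.Br.V, H.Br.degAt v = 0 := fun v => by
    rw [degAt_eq_ncard_incidenceSet, Set.eq_empty_of_isEmpty (H.Br.incidenceSet v),
      Set.ncard_empty]
  have hV : Nat.card H.Br.V = 1 := by
    refine Nat.card_eq_one_iff_unique.mpr ⟨⟨fun u v => ?_⟩, ⟨H.toBr hc.1.some⟩⟩
    induction u using Quot.ind
    induction v using Quot.ind
    exact Quot.sound ((hc.2 _ _).mono fun f _ => h f)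
  have h0 : {v : H.Br.V | H.Br.degAt v = 0} = Set.univ := Set.eq_univ_of_forall hdeg
  have h1 : {v : H.Br.V | H.Br.degAt v = 1} = ∅ :=
    Set.eq_empty_of_forall_notMem fun v (hv : H.Br.degAt v = 1) =>
      zero_ne_one ((hdeg v).symm.trans hv)
  rw [numLeaves, h0, h1, Set.ncard_univ, hV, Set.ncard_empty]

theorem numLeaves_br_of_isBridge {H : Multigraph} {a b : H.V} (hc : H.Connected)
    (hsep : ∀ f, H.IsBridge f → ¬ H.ReachOn {h | h ≠ f} a b) {g : H.E} (hg : H.IsBridge g) :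
    H.Br.numLeaves = 2 := by
  have hleaf : ∀ {p q : H.V}, (∀ f, H.IsBridge f → ¬ H.ReachOn {h | h ≠ f} p q) →
      H.Br.degAt (H.toBr p) = 1 := fun hsep' => by
    obtain ⟨F, hF⟩ := br_incidenceSet_nonempty hc hg (H.toBr _)
    rw [degAt_eq_ncard_incidenceSet, Set.ncard_eq_one]
    exact ⟨F, (br_incidenceSet_toBr_subsingleton hc hsep').eq_singleton_of_mem hF⟩
  have hab : H.toBr a ≠ H.toBr b := fun h =>
    hsep g hg ((toBr_eq_toBr_iff.mp h).mono (setOf_not_isBridge_subset hg))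
  have h0 : {v : H.Br.V | H.Br.degAt v = 0} = ∅ :=
    Set.eq_empty_of_forall_notMem fun v hv => by
      have := (Set.ncard_pos (Set.toFinite _)).mpr (br_incidenceSet_nonempty hc hg v)
      rw [Set.mem_ofPred_eq, degAt_eq_ncard_incidenceSet] at hv
      omega
  have h1 : {v : H.Br.V | H.Br.degAt v = 1} = {H.toBr a, H.toBr b} := by
    ext v
    refine ⟨fun hv => ?_, ?_⟩
    · obtain ⟨c, rfl⟩ := Quot.exists_rep v
      obtain ⟨F, hF⟩ := Set.ncard_eq_one.mp hv
      exact toBr_eq_or_eq_of_br_incidenceSet_eq_singleton hc hsep hF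
    · rintro (rfl | rfl)
      exacts [hleaf hsep, hleaf fun f hf h => hsep f hf h.symm]
  rw [numLeaves, h0, h1, Set.ncard_empty, Set.ncard_pair hab]

theorem numLeaves_br_of_forall_isBridge_separates {H : Multigraph} {a b : H.V}
    (hc : H.Connected) (hsep : ∀ f, H.IsBridge f → ¬ H.ReachOn {h | h ≠ f} a b) :
    H.Br.numLeaves = 2 := by
  by_cases hB : ∃ g, H.IsBridge g
  · exact numLeaves_br_of_isBridge hc hsep hB.choose_spec
  · exact numLeaves_br_of_forall_not_isBridge hc (not_exists.mp hB)

section DeleteEdge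

variable {G : Multigraph} {e : G.E}

theorem reachOn_deleteEdge_iff {T : Set G.E} {u v : G.V} :
    (G.deleteEdge e).ReachOn (Subtype.val ⁻¹' T) u v ↔ G.ReachOn (T \ {e}) u v := by
  constructor <;> refine fun h => Relation.ReflTransGen.mono ?_ _ _ h
  · rintro x y ⟨f, hf, hends⟩
    exact ⟨f.1, ⟨hf, f.2⟩, hends⟩
  · rintro x y ⟨f, ⟨hf, hfe⟩, hends⟩
    exact ⟨⟨f, hfe⟩, hf, hends⟩

theorem Connected.deleteEdge (hc : G.Connected) (he : ¬ G.IsBridge e) :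
    (G.deleteEdge e).Connected := by
  have he' : G.ReachOn (Set.univ \ {e}) (G.src e) (G.tgt e) :=
    (not_not.mp he).mono fun _ hf => ⟨trivial, hf⟩
  exact ⟨hc.1, fun u v => (reachOn_deleteEdge_iff (e := e) (T := Set.univ)).mpr
    ((hc.2 u v : G.ReachOn Set.univ u v).diff_singleton he')⟩

theorem not_reachOn_deleteEdge_of_isBridge {f : (G.deleteEdge e).E} (hf : ¬ G.IsBridge f.1)
    (hfe : (G.deleteEdge e).IsBridge f) :
    ¬ (G.deleteEdge e).ReachOn {h | h ≠ f} (G.src e) (G.tgt e) := by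
  have hset : {h : (G.deleteEdge e).E | h ≠ f} = Subtype.val ⁻¹' {f.1}ᶜ :=
    Set.ext fun _ => Subtype.val_injective.ne_iff.symm
  intro he
  apply hfe
  rw [hset] at he ⊢
  have hf' : G.ReachOn {f.1}ᶜ (G.src f.1) (G.tgt f.1) := not_not.mp hf
  exact reachOn_deleteEdge_iff.mpr (hf'.diff_singleton (reachOn_deleteEdge_iff.mp he))

end DeleteEdge

end Multigraph

/-- Let `G` be a 2-edge-connected multigraph and `e` any edge.
Then `#l((G - e)^Br) = #l(G^Br) = 2`. -/
theorem leaves_of_deleteEdge (G : Multigraph) (hG : G.TwoEdgeConnected) (e : G.E) :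
    (G.deleteEdge e).Br.numLeaves = 2 ∧ G.Br.numLeaves = 2 :=
  ⟨Multigraph.numLeaves_br_of_forall_isBridge_separates (hG.1.deleteEdge (hG.2 e))
      fun f hf => Multigraph.not_reachOn_deleteEdge_of_isBridge (hG.2 f.1) hf,
    Multigraph.numLeaves_br_of_forall_not_isBridge hG.1 hG.2⟩
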